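/- (One-step geometric decrease of the potential.) Let P be a finite set of paths, x, s, s* impact vectors with d_{x+s*}(p) ≥ T for all p ∈ P and ‖s*‖ > 0, and set s° = s* \ s. Let ϵ ∈ [0,1), v a vertex and x̂ > 0, and suppose that for every vertex u with s°_u > 0: r_{P,x+s,v}(x̂)/x̂ ≥ (1−ϵ) · r_{P,x+s,u}(s°_u)/s°_u. Then for every subset P' ⊆ P: ∑_{p∈P'} (T − d_{x+s+⟨v,x̂⟩}(p)) ≤ (1 − x̂(1−ϵ)/‖s*‖) · ∑_{p∈P} (T − d_{x+s}(p)). -/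
import Mathlib


/-- The capped length of a path `p` under impact vector `x`:
`d_x(p) = min(∑_{v ∈ p} f_v(x_v), T)`. -/
noncomputable def dLen {V : Type*} (f : V → ℝ → ℝ) (T : ℝ) (x : V → ℝ) (p : List V) : ℝ :=
  min ((p.map (fun v => f v (x v))).sum) T

/-- `r_{P,w,v}(a) = ∑_{p∈P} (d_{w+⟨v,a⟩}(p) − d_w(p))`. -/
noncomputable def rGain {V : Type*} [DecidableEq V] (f : V → ℝ → ℝ) (T : ℝ)
    (P : Finset (List V)) (w : V → ℝ) (v : V) (a : ℝ) : ℝ :=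
  ∑ p ∈ P, (dLen f T (w + Pi.single v a) p - dLen f T w p)

private lemma min_add_le_aux {x y c : ℝ} (hx : 0 ≤ x) (hy : 0 ≤ y) (hc : 0 ≤ c) :
    min (x + y) c ≤ min x c + min y c := by
  simp only [min_def]
  split_ifs <;> linarith

private lemma min_sum_le {V : Type*} (F : Finset V) (δ : V → ℝ) (c : ℝ)
    (hc : 0 ≤ c) :
    ∀ _ : ∀ u ∈ F, 0 ≤ δ u, min (∑ u ∈ F, δ u) c ≤ ∑ u ∈ F, min (δ u) c := by
  classical
  induction F using Finset.induction_on with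
  | empty => intro _; simpa using hc
  | @insert a F ha ih =>
    intro hδ
    rw [Finset.sum_insert ha, Finset.sum_insert ha]
    have h1 : 0 ≤ δ a := hδ a (Finset.mem_insert_self a F)
    have h2 : ∀ u ∈ F, 0 ≤ δ u := fun u hu => hδ u (Finset.mem_insert_of_mem hu)
    have h3 : 0 ≤ ∑ u ∈ F, δ u := Finset.sum_nonneg h2
    calc min (δ a + ∑ u ∈ F, δ u) c ≤ min (δ a) c + min (∑ u ∈ F, δ u) c :=
          min_add_le_aux h1 h3 hc
      _ ≤ min (δ a) c + ∑ u ∈ F, min (δ u) c := by linarith [ih h2]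

private lemma sum_map_single {V : Type*} [DecidableEq V] (g : V → ℝ → ℝ) (w : V → ℝ)
    (p : List V) (hp : p.Nodup) (u : V) (a : ℝ) :
    (p.map fun v => g v ((w + Pi.single u a : V → ℝ) v)).sum
      = (p.map fun v => g v (w v)).sum
        + (if u ∈ p then g u (w u + a) - g u (w u) else 0) := by
  rw [← List.sum_toFinset _ hp, ← List.sum_toFinset _ hp]
  have hcong : ∀ v ∈ p.toFinset, g v ((w + Pi.single u a : V → ℝ) v)
      = g v (w v) + (if v = u then g u (w u + a) - g u (w u) else 0) := by
    intro v _
    by_cases hv : v = u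
    · subst hv
      rw [if_pos rfl]
      simp only [Pi.add_apply, Pi.single_eq_same]
      ring
    · simp [Pi.single_eq_of_ne hv, hv]
  rw [Finset.sum_congr rfl hcong, Finset.sum_add_distrib,
    Finset.sum_ite_eq' p.toFinset u (fun _ => g u (w u + a) - g u (w u))]
  simp [List.mem_toFinset]

private lemma dLen_mono {V : Type*} (f : V → ℝ → ℝ) (T : ℝ)
    (hf : ∀ v, MonotoneOn (f v) (Set.Ici 0)) (w w' : V → ℝ)
    (hw : ∀ u, 0 ≤ w u) (hww' : ∀ u, w u ≤ w' u) (p : List V) :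
    dLen f T w p ≤ dLen f T w' p := by
  unfold dLen
  refine min_le_min (List.sum_le_sum ?_) le_rfl
  intro i _
  exact hf i (Set.mem_Ici.mpr (hw i)) (Set.mem_Ici.mpr ((hw i).trans (hww' i)))
    (hww' i)

private lemma key_path {V : Type*} [Fintype V] [DecidableEq V]
    (f : V → ℝ → ℝ) (T : ℝ) (w c : V → ℝ)
    (hw : ∀ u, 0 ≤ w u) (hc : ∀ u, 0 ≤ c u)
    (hf : ∀ v, MonotoneOn (f v) (Set.Ici 0))
    (p : List V) (hp : p.Nodup)
    (hbig : T ≤ (p.map fun v => f v (w v + c v)).sum) :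
    T - dLen f T w p ≤ ∑ u : V, (dLen f T (w + Pi.single u (c u)) p - dLen f T w p) := by
  classical
  set S : ℝ := (p.map fun v => f v (w v)).sum with hS
  set δ : V → ℝ := fun u => if u ∈ p then f u (w u + c u) - f u (w u) else 0 with hδdef
  have hδ0 : ∀ u, 0 ≤ δ u := by
    intro u
    simp only [hδdef]
    split_ifs with h
    · have := hf u (Set.mem_Ici.mpr (hw u))
        (Set.mem_Ici.mpr (add_nonneg (hw u) (hc u))) (by linarith [hc u])
      linarith
    · exact le_rfl
  have hd : ∀ u, dLen f T (w + Pi.single u (c u)) p = min (S + δ u) T := by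
    intro u
    unfold dLen
    rw [sum_map_single f w p hp u (c u)]
  have hsum : T ≤ S + ∑ u : V, δ u := by
    have h1 : ∑ u : V, δ u = ∑ u ∈ p.toFinset, (f u (w u + c u) - f u (w u)) := by
      rw [← Finset.sum_subset (Finset.subset_univ p.toFinset)]
      · exact Finset.sum_congr rfl fun u hu => by
          simp [hδdef, List.mem_toFinset.mp hu]
      · intro u _ hu
        have hnp : u ∉ p := fun h => hu (List.mem_toFinset.mpr h)
        simp [hδdef, hnp]
    have h2 : S = ∑ u ∈ p.toFinset, f u (w u) := (List.sum_toFinset _ hp).symm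
    have h3 : (p.map fun v => f v (w v + c v)).sum
        = ∑ u ∈ p.toFinset, f u (w u + c u) := (List.sum_toFinset _ hp).symm
    rw [h1, h2]
    have h4 : ∑ u ∈ p.toFinset, f u (w u)
        + ∑ u ∈ p.toFinset, (f u (w u + c u) - f u (w u))
        = ∑ u ∈ p.toFinset, f u (w u + c u) := by
      rw [← Finset.sum_add_distrib]
      exact Finset.sum_congr rfl fun u _ => by ring
    rw [h4, ← h3]
    exact hbig
  have hdL : dLen f T w p = min S T := rfl
  have hrw : ∀ u : V, dLen f T (w + Pi.single u (c u)) p - dLen f T w p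
      = min (S + δ u) T - min S T := fun u => by rw [hd u, hdL]
  rw [Finset.sum_congr rfl fun u _ => hrw u, hdL]
  rcases le_total T S with h | h
  · have h0 : ∀ u : V, min (S + δ u) T - min S T = 0 := by
      intro u
      rw [min_eq_right h, min_eq_right (by linarith [hδ0 u])]
      ring
    rw [Finset.sum_congr rfl fun u _ => h0 u, Finset.sum_const_zero,
      min_eq_right h]
    linarith
  · have hmS : min S T = S := min_eq_left h
    have h0 : ∀ u : V, min (S + δ u) T - min S T = min (δ u) (T - S) := by
      intro u
      rw [hmS]
      simp only [min_def]
      split_ifs <;> linarith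
    rw [Finset.sum_congr rfl fun u _ => h0 u, hmS]
    have hkey := min_sum_le Finset.univ δ (T - S) (by linarith) (fun u _ => hδ0 u)
    have : min (∑ u : V, δ u) (T - S) = T - S :=
      min_eq_right (by linarith)
    linarith

/-- one-step geometric decrease of the potential. -/
theorem stmt7 {V : Type*} [Fintype V] [DecidableEq V]
    (f : V → ℝ → ℝ) (T : ℝ) (hT : 0 < T)
    (hf : ∀ v, MonotoneOn (f v) (Set.Ici 0))
    (hf0 : ∀ v y, 0 ≤ y → 0 ≤ f v y)
    (P : Finset (List V)) (hP : ∀ p ∈ P, p.Nodup)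
    (x s sStar : V → ℝ)
    (hx : ∀ u, 0 ≤ x u) (hs : ∀ u, 0 ≤ s u) (hsStar : ∀ u, 0 ≤ sStar u)
    (hopt : ∀ p ∈ P, T ≤ dLen f T (x + sStar) p)
    (hsStarPos : 0 < ∑ u : V, sStar u)
    (sCirc : V → ℝ) (hsCirc : ∀ u, sCirc u = max (sStar u - s u) 0)
    (ϵ : ℝ) (hϵ0 : 0 ≤ ϵ) (hϵ1 : ϵ < 1)
    (v : V) (xhat : ℝ) (hxhat : 0 < xhat)
    (hgreedy : ∀ u, 0 < sCirc u →
      (1 - ϵ) * (rGain f T P (x + s) u (sCirc u) / sCirc u)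
        ≤ rGain f T P (x + s) v xhat / xhat) :
    ∀ P' ⊆ P,
      ∑ p ∈ P', (T - dLen f T (x + s + Pi.single v xhat) p) ≤
        (1 - xhat * (1 - ϵ) / ∑ u : V, sStar u) * ∑ p ∈ P, (T - dLen f T (x + s) p) := by
  intro P' hP'
  classical
  have hw0 : ∀ u, 0 ≤ (x + s) u := fun u => add_nonneg (hx u) (hs u)
  have hsC0 : ∀ u, 0 ≤ sCirc u := fun u => by rw [hsCirc]; exact le_max_right _ _
  set Φ : ℝ := ∑ p ∈ P, (T - dLen f T (x + s) p) with hΦ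
  -- raw sums with sCirc added exceed T
  have hbig : ∀ p ∈ P, T ≤ (p.map fun u => f u ((x + s) u + sCirc u)).sum := by
    intro p hp
    have h1 : T ≤ (p.map fun u => f u ((x + sStar) u)).sum := by
      have := hopt p hp
      unfold dLen at this
      exact (le_min_iff.mp this).1
    refine h1.trans (List.sum_le_sum ?_)
    intro i _
    have harg : (x + sStar) i ≤ (x + s) i + sCirc i := by
      have : sStar i - s i ≤ sCirc i := by rw [hsCirc]; exact le_max_left _ _
      simp only [Pi.add_apply]
      linarith
    exact hf i (Set.mem_Ici.mpr (add_nonneg (hx i) (hsStar i)))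
      (Set.mem_Ici.mpr ((add_nonneg (hx i) (hsStar i)).trans harg)) harg
  -- Step 1 : Φ ≤ ∑ u, rGain u (sCirc u)
  have hstep1 : Φ ≤ ∑ u : V, rGain f T P (x + s) u (sCirc u) := by
    unfold rGain
    rw [Finset.sum_comm]
    exact Finset.sum_le_sum fun p hp =>
      key_path f T (x + s) sCirc hw0 hsC0 hf p (hP p hp) (hbig p hp)
  -- rGain at v is nonnegative
  have hrv0 : 0 ≤ rGain f T P (x + s) v xhat := by
    unfold rGain
    refine Finset.sum_nonneg fun p _ => sub_nonneg.mpr ?_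
    refine dLen_mono f T hf _ _ hw0 (fun u => ?_) p
    have h1 : (0:ℝ) ≤ (Pi.single v xhat : V → ℝ) u := by
      by_cases h : u = v
      · subst h; simp [Pi.single_eq_same]; linarith
      · simp [Pi.single_eq_of_ne h]
    simp only [Pi.add_apply]
    linarith
  set q : ℝ := rGain f T P (x + s) v xhat / xhat with hq
  have hq0 : 0 ≤ q := div_nonneg hrv0 (le_of_lt hxhat)
  -- Step 2
  have hstep2 : (1 - ϵ) * ∑ u : V, rGain f T P (x + s) u (sCirc u)
      ≤ (∑ u : V, sStar u) * q := by
    rw [Finset.mul_sum]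
    calc ∑ u : V, (1 - ϵ) * rGain f T P (x + s) u (sCirc u)
        ≤ ∑ u : V, sCirc u * q := by
          refine Finset.sum_le_sum fun u _ => ?_
          rcases (hsC0 u).lt_or_eq with h | h
          · have hh := hgreedy u h
            have := mul_le_mul_of_nonneg_left hh (le_of_lt h)
            calc (1 - ϵ) * rGain f T P (x + s) u (sCirc u)
                = sCirc u * ((1 - ϵ) * (rGain f T P (x + s) u (sCirc u) / sCirc u)) := by
                  field_simp
              _ ≤ sCirc u * q := this
          · have hz : sCirc u = 0 := h.symm
            have : rGain f T P (x + s) u (sCirc u) = 0 := by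
              unfold rGain
              rw [hz]
              simp
            rw [this, hz]
            simp
      _ ≤ ∑ u : V, sStar u * q := by
          refine Finset.sum_le_sum fun u _ => ?_
          refine mul_le_mul_of_nonneg_right ?_ hq0
          rw [hsCirc]
          exact max_le (by linarith [hs u]) (hsStar u)
      _ = (∑ u : V, sStar u) * q := by rw [Finset.sum_mul]
  -- combine
  have hS : (0:ℝ) < ∑ u : V, sStar u := hsStarPos
  have hΦq : (1 - ϵ) * Φ ≤ (∑ u : V, sStar u) * q := by
    have := mul_le_mul_of_nonneg_left hstep1 (by linarith : (0:ℝ) ≤ 1 - ϵ)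
    linarith
  have hqge : (1 - ϵ) * Φ / (∑ u : V, sStar u) ≤ q :=
    (div_le_iff₀ hS).mpr (by linarith)
  have hrvq : rGain f T P (x + s) v xhat = xhat * q := by
    rw [hq, mul_div_cancel₀ _ (ne_of_gt hxhat)]
  have hr : xhat * (1 - ϵ) / (∑ u : V, sStar u) * Φ ≤ rGain f T P (x + s) v xhat := by
    rw [hrvq]
    have := mul_le_mul_of_nonneg_left hqge (le_of_lt hxhat)
    calc xhat * (1 - ϵ) / (∑ u : V, sStar u) * Φ
        = xhat * ((1 - ϵ) * Φ / (∑ u : V, sStar u)) := by ring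
      _ ≤ xhat * q := this
  -- final chain
  calc ∑ p ∈ P', (T - dLen f T (x + s + Pi.single v xhat) p)
      ≤ ∑ p ∈ P, (T - dLen f T (x + s + Pi.single v xhat) p) := by
        refine Finset.sum_le_sum_of_subset_of_nonneg hP' fun p _ _ => ?_
        have : dLen f T (x + s + Pi.single v xhat) p ≤ T := min_le_right _ _
        linarith
    _ = Φ - rGain f T P (x + s) v xhat := by
        rw [hΦ]
        unfold rGain
        rw [← Finset.sum_sub_distrib]
        exact Finset.sum_congr rfl fun p _ => by ring
    _ ≤ Φ - xhat * (1 - ϵ) / (∑ u : V, sStar u) * Φ := by linarith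
    _ = (1 - xhat * (1 - ϵ) / ∑ u : V, sStar u) * Φ := by ring
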